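/- Let t ∈ R(E,F) be a regular operator with bounded transform F_t = t(1+t*t)^{-1/2}. Then t is recovered from F_t via t = F_t (1 − F_t* F_t)^{-1/2}, and (1+t*t)^{-1/2} = (1 − F_t* F_t)^{1/2}. -/

import Mathlib

/- Framework: Hilbert C*-modules over a C*-algebra `A` (via Mathlib's `CStarModule`),
densely defined operators as `LinearPMap`s, `A`-valued orthogonality, adjoints,
regularity, graphs inside `E ⊕ F`. -/

open scoped InnerProductSpace RightActions WithCStarModule

/-- The class `CStarModule` of the Mathlib this file was written against (December 2024):
a right Hilbert `A`-module, `⟪x, y <• a⟫ = ⟪x, y⟫ * a`. Current Mathlib's `CStarModule` uses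
another convention (left action, `⟪x, a • y⟫ = a * ⟪x, y⟫`), so the old class is copied here. -/
class RightCStarModule (A : outParam <| Type*) (E : Type*) [NonUnitalSemiring A] [StarRing A]
    [Module ℂ A] [AddCommGroup E] [Module ℂ E] [PartialOrder A] [SMul Aᵐᵒᵖ E] [Norm A] [Norm E]
    extends Inner A E where
  inner_add_right {x} {y} {z} : inner x (y + z) = inner x y + inner x z
  inner_self_nonneg {x} : 0 ≤ inner x x
  inner_self {x} : inner x x = 0 ↔ x = 0
  inner_op_smul_right {a : A} {x y : E} : inner x (y <• a) = inner x y * a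
  inner_smul_right_complex {z : ℂ} {x} {y} : inner x (z • y) = z • inner x y
  star_inner x y : star (inner x y) = inner y x
  norm_eq_sqrt_norm_inner_self x : ‖x‖ = √‖inner x x‖

namespace RightCStarModule

/-- Auxiliary synonym: `E` with the conjugate complex structure, which turns an old-style
module into a current-Mathlib `CStarModule` (used only to get the norm axioms). -/
def ConjSyn (E : Type*) := E

/-- The identity map `ConjSyn E → E`. -/
def toE {E : Type*} (x : ConjSyn E) : E := x

instance {E : Type*} [AddCommGroup E] : AddCommGroup (ConjSyn E) := ‹AddCommGroup E›

instance {E : Type*} [Norm E] : Norm (ConjSyn E) := ‹Norm E›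

instance {E : Type*} [AddCommGroup E] [Module ℂ E] : Module ℂ (ConjSyn E) :=
  (Module.compHom (M := E) (starRingEnd ℂ) : Module ℂ E)

instance {A E : Type*} [Star A] [SMul Aᵐᵒᵖ E] : SMul A (ConjSyn E) :=
  ⟨fun a x => (MulOpposite.op (star a) • toE x : E)⟩

lemma inner_add_left' {A E : Type*} [NonUnitalCStarAlgebra A] [PartialOrder A]
    [AddCommGroup E] [Module ℂ E] [SMul Aᵐᵒᵖ E] [Norm E] [RightCStarModule A E] (x y z : E) :
    inner A (x + y) z = inner A x z + inner A y z := by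
  rw [← RightCStarModule.star_inner (A := A) z, RightCStarModule.inner_add_right, star_add,
    RightCStarModule.star_inner, RightCStarModule.star_inner]

noncomputable instance instCStarModuleConj {A E : Type*} [NonUnitalCStarAlgebra A]
    [PartialOrder A] [AddCommGroup E] [Module ℂ E] [SMul Aᵐᵒᵖ E] [Norm E]
    [RightCStarModule A E] : CStarModule A (ConjSyn E) where
  inner x y := inner A (toE y) (toE x)
  inner_add_right {x y z} := inner_add_left' (A := A) (E := E) (toE y) (toE z) (toE x)
  inner_self_nonneg := RightCStarModule.inner_self_nonneg (A := A) (E := E)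
  inner_self := RightCStarModule.inner_self (A := A) (E := E)
  inner_op_smul_right {a x y} := by
    show inner A (MulOpposite.op (star a) • toE y) (toE x) = a * inner A (toE y) (toE x)
    rw [← RightCStarModule.star_inner (A := A) (toE x), RightCStarModule.inner_op_smul_right,
      star_mul, star_star, RightCStarModule.star_inner]
  inner_smul_right_complex {z x y} := by
    show inner A (starRingEnd ℂ z • toE y) (toE x) = z • inner A (toE y) (toE x)
    rw [← RightCStarModule.star_inner (A := A) (toE x), RightCStarModule.inner_smul_right_complex,
      star_smul, RightCStarModule.star_inner]
    simp
  star_inner x y := RightCStarModule.star_inner (A := A) (toE y) (toE x)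
  norm_eq_sqrt_norm_inner_self x := RightCStarModule.norm_eq_sqrt_norm_inner_self (A := A) (toE x)

lemma normedSpaceCore' {A E : Type*} [NonUnitalCStarAlgebra A] [PartialOrder A]
    [StarOrderedRing A] [AddCommGroup E] [Module ℂ E] [SMul Aᵐᵒᵖ E] [Norm E]
    [RightCStarModule A E] : NormedSpace.Core ℂ E where
  norm_nonneg x := CStarModule.norm_nonneg A (E := ConjSyn E) (x := x)
  norm_eq_zero_iff x := CStarModule.norm_zero_iff A (E := ConjSyn E) x
  norm_smul c x := by
    have h := (CStarModule.normedSpaceCore A (E := ConjSyn E)).norm_smul (starRingEnd ℂ c) x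
    change ‖(starRingEnd ℂ (starRingEnd ℂ c)) • (x : E)‖ = ‖starRingEnd ℂ c‖ * ‖(x : E)‖ at h
    simpa using h
  norm_triangle x y := CStarModule.norm_triangle A (E := ConjSyn E) x y

section Prod

variable {A : Type*} [NonUnitalCStarAlgebra A] [PartialOrder A] [StarOrderedRing A]
variable {E F : Type*}
  [NormedAddCommGroup E] [Module ℂ E] [SMul Aᵐᵒᵖ E] [RightCStarModule A E]
  [NormedAddCommGroup F] [Module ℂ F] [SMul Aᵐᵒᵖ F] [RightCStarModule A F]

noncomputable instance instNormProd : Norm C⋆ᵐᵒᵈ(A, E × F) where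
  norm x := √‖inner A x.1 x.1 + inner A x.2 x.2‖

noncomputable instance instRightCStarModuleProd : RightCStarModule A C⋆ᵐᵒᵈ(A, E × F) where
  inner x y := inner A x.1 y.1 + inner A x.2 y.2
  inner_add_right {x y z} := by
    show inner A x.1 (y.1 + z.1) + inner A x.2 (y.2 + z.2) = _
    rw [RightCStarModule.inner_add_right, RightCStarModule.inner_add_right]
    abel
  inner_self_nonneg := add_nonneg RightCStarModule.inner_self_nonneg
    RightCStarModule.inner_self_nonneg
  inner_self {x} := by
    change inner A x.1 x.1 + inner A x.2 x.2 = 0 ↔ _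
    refine ⟨fun h ↦ ?_, fun h ↦ ?_⟩
    · have h1 : x.1 = 0 := RightCStarModule.inner_self.mp <| le_antisymm
        ((le_add_of_nonneg_right RightCStarModule.inner_self_nonneg).trans_eq h)
        RightCStarModule.inner_self_nonneg
      have h2 : x.2 = 0 := RightCStarModule.inner_self.mp <| le_antisymm
        ((le_add_of_nonneg_left RightCStarModule.inner_self_nonneg).trans_eq h)
        RightCStarModule.inner_self_nonneg
      exact Prod.ext h1 h2
    · subst h
      change inner A (0 : E) 0 + inner A (0 : F) 0 = 0
      rw [RightCStarModule.inner_self.mpr rfl, RightCStarModule.inner_self.mpr rfl, add_zero]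
  inner_op_smul_right {a x y} := by
    show inner A x.1 (y.1 <• a) + inner A x.2 (y.2 <• a) = (inner A x.1 y.1 + inner A x.2 y.2) * a
    rw [RightCStarModule.inner_op_smul_right, RightCStarModule.inner_op_smul_right, add_mul]
  inner_smul_right_complex {z x y} := by
    show inner A x.1 (z • y.1) + inner A x.2 (z • y.2) = z • (inner A x.1 y.1 + inner A x.2 y.2)
    rw [RightCStarModule.inner_smul_right_complex, RightCStarModule.inner_smul_right_complex,
      smul_add]
  star_inner x y := by
    show star (inner A x.1 y.1 + inner A x.2 y.2) = inner A y.1 x.1 + inner A y.2 x.2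
    rw [star_add, RightCStarModule.star_inner, RightCStarModule.star_inner]
  norm_eq_sqrt_norm_inner_self x := rfl

noncomputable instance instNormedAddCommGroupProd : NormedAddCommGroup C⋆ᵐᵒᵈ(A, E × F) :=
  NormedAddCommGroup.ofCore (normedSpaceCore' (A := A))

end Prod

end RightCStarModule

namespace RegularOperators

variable (A : Type*) [NonUnitalCStarAlgebra A] [PartialOrder A] [StarOrderedRing A]

section Defs

variable {E F : Type*}
  [NormedAddCommGroup E] [Module ℂ E] [SMul Aᵐᵒᵖ E] [RightCStarModule A E]
  [NormedAddCommGroup F] [Module ℂ F] [SMul Aᵐᵒᵖ F] [RightCStarModule A F]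

/-- Orthogonal complement of a subset w.r.t. the `A`-valued inner product. -/
def ortho (S : Set E) : Set E := {y | ∀ u ∈ S, ⟪u, y⟫_A = 0}

/-- `S` is orthogonally complemented (an orthogonal summand): every element of `E`
decomposes as a sum of an element of `S` and an element of `S^⊥`. -/
def OrthoComplemented (S : Set E) : Prop := ∀ z : E, ∃ u ∈ S, ∃ v ∈ ortho A S, z = u + v

/-- A partially defined operator is `A`-linear (for the right `A`-module action). -/
def AModuleMap (t : E →ₗ.[ℂ] F) : Prop :=
  ∀ (a : A) (x : t.domain), ∃ hx : (x : E) <• a ∈ t.domain, t ⟨(x : E) <• a, hx⟩ = (t x) <• a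

/-- Kernel of a partially defined operator, as a subset of `E`. -/
def kerSet (t : E →ₗ.[ℂ] F) : Set E := {x | ∃ hx : x ∈ t.domain, t ⟨x, hx⟩ = 0}

/-- Range of a partially defined operator. -/
def ranSet (t : E →ₗ.[ℂ] F) : Set F := {y | ∃ x : t.domain, t x = y}

/-- Domain of the adjoint: those `y` for which some `z` satisfies `⟪tx, y⟫ = ⟪x, z⟫`
for all `x` in the domain of `t`. -/
def adjDomain (t : E →ₗ.[ℂ] F) : Set F :=
  {y | ∃ z : E, ∀ x : t.domain, ⟪t x, y⟫_A = ⟪(x : E), z⟫_A}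

/-- `s` is the adjoint operator `t*` of `t`. -/
structure IsAdjoint (t : E →ₗ.[ℂ] F) (s : F →ₗ.[ℂ] E) : Prop where
  dom : (s.domain : Set F) = adjDomain A t
  inner_eq : ∀ (x : t.domain) (y : s.domain), ⟪t x, (y : F)⟫_A = ⟪(x : E), s y⟫_A

/-- The range of `1 + t*t` (where `s` plays the role of `t*`). -/
def onePlusRange (t : E →ₗ.[ℂ] F) (s : F →ₗ.[ℂ] E) : Set E :=
  {u | ∃ (x : t.domain) (h : t x ∈ s.domain), (x : E) + s ⟨t x, h⟩ = u}

/-- `t` is a regular operator with adjoint `s`: it is `A`-linear, densely defined,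
closed, adjointable with densely defined adjoint, and `1 + t*t` has dense range. -/
structure IsRegular (t : E →ₗ.[ℂ] F) (s : F →ₗ.[ℂ] E) : Prop where
  amod : AModuleMap A t
  denseDom : Dense (t.domain : Set E)
  closedGraph : IsClosed (t.graph : Set (E × F))
  adj : IsAdjoint A t s
  denseAdjDom : Dense (s.domain : Set F)
  denseOnePlusRange : Dense (onePlusRange t s)

/-- The graph of `t` inside the Hilbert `A`-module `E ⊕ F`. -/
def graphSet (t : E →ₗ.[ℂ] F) : Set (C⋆ᵐᵒᵈ(A, E × F)) :=
  {w | ∃ x : t.domain, WithCStarModule.equiv A (E × F) w = ((x : E), t x)}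

/-- The range of `P_F ∘ P_{G(t)^⊥}`, i.e. the image of `G(t)^⊥ ⊆ E ⊕ F` under the
canonical projection onto `F`. -/
def pfRange (t : E →ₗ.[ℂ] F) : Set F :=
  {y | ∃ w ∈ ortho A (graphSet A t), (WithCStarModule.equiv A (E × F) w).2 = y}

end Defs

end RegularOperators

/-!
Write `Q = (1+t*t)^{-1/2}`. Since `s = t*` and `(1 + t*t) Q² = 1`, for all `x u`
`⟪Q x, F_t* F_t u⟫ = ⟪t Q² x, t Q u⟫ = ⟪t* t Q² x, Q u⟫ = ⟪x - Q² x, Q u⟫ = ⟪Q x, u - Q² u⟫`.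
As `Q` is self-adjoint this says `Q (F_t* F_t u) = Q (u - Q² u)`, and `Q` is injective because
`Q²` has the left inverse `1 + t*t`. The formula for `t` is just `F_t = t Q`.
-/

namespace RightCStarModule

variable {A E : Type*} [NonUnitalCStarAlgebra A] [PartialOrder A]
  [AddCommGroup E] [Module ℂ E] [SMul Aᵐᵒᵖ E] [Norm E] [RightCStarModule A E]

lemma inner_sub_left (x y z : E) : ⟪x - y, z⟫_A = ⟪x, z⟫_A - ⟪y, z⟫_A := by
  rw [eq_sub_iff_add_eq, ← inner_add_left', sub_add_cancel]

lemma inner_sub_right (x y z : E) : ⟪x, y - z⟫_A = ⟪x, y⟫_A - ⟪x, z⟫_A := by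
  rw [eq_sub_iff_add_eq, ← inner_add_right, sub_add_cancel]

lemma ext_inner_left {y z : E} (h : ∀ x : E, ⟪x, y⟫_A = ⟪x, z⟫_A) : y = z := by
  rw [← sub_eq_zero, ← inner_self (A := A), inner_sub_right, h, sub_self]

end RightCStarModule

namespace RegularOperators

section Injective

variable {R E F : Type*} [Ring R] [AddCommGroup E] [Module R E] [AddCommGroup F] [Module R F]

lemma injective_of_one_add_comp_sq_eq_id (t : E →ₗ.[R] F) (s : F →ₗ.[R] E) (Q : E → E)
    (hmem : ∀ x : E, Q x ∈ t.domain)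
    (hQinv : ∀ u : E, ∃ h : t ⟨Q (Q u), hmem (Q u)⟩ ∈ s.domain,
      Q (Q u) + s ⟨t ⟨Q (Q u), hmem (Q u)⟩, h⟩ = u) :
    Function.Injective Q := by
  intro a b hab
  obtain ⟨ha, ea⟩ := hQinv a
  obtain ⟨hb, eb⟩ := hQinv b
  rw [← ea, ← eb]
  simp only [hab]

end Injective

variable {A : Type*} [NonUnitalCStarAlgebra A] [PartialOrder A]
variable {E F : Type*}
  [NormedAddCommGroup E] [Module ℂ E] [SMul Aᵐᵒᵖ E] [RightCStarModule A E]
  [NormedAddCommGroup F] [Module ℂ F] [SMul Aᵐᵒᵖ F] [RightCStarModule A F]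

lemma inner_apply_sq_apply_eq_inner_sub {t : E →ₗ.[ℂ] F} {s : F →ₗ.[ℂ] E} (hadj : IsAdjoint A t s)
    {Q : E → E} (hmem : ∀ x : E, Q x ∈ t.domain)
    (hQinv : ∀ u : E, ∃ h : t ⟨Q (Q u), hmem (Q u)⟩ ∈ s.domain,
      Q (Q u) + s ⟨t ⟨Q (Q u), hmem (Q u)⟩, h⟩ = u) (x : E) (y : t.domain) :
    ⟪t ⟨Q (Q x), hmem (Q x)⟩, t y⟫_A = ⟪x - Q (Q x), (y : E)⟫_A := by
  obtain ⟨hx, ex⟩ := hQinv x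
  rw [← RightCStarModule.star_inner, hadj.inner_eq y ⟨_, hx⟩, RightCStarModule.star_inner,
    ← eq_sub_of_add_eq' ex]

end RegularOperators

open RegularOperators
variable {A : Type*} [NonUnitalCStarAlgebra A] [PartialOrder A] [StarOrderedRing A]
variable {E F : Type*}
  [NormedAddCommGroup E] [Module ℂ E] [SMul Aᵐᵒᵖ E] [RightCStarModule A E] [CompleteSpace E]
  [NormedAddCommGroup F] [Module ℂ F] [SMul Aᵐᵒᵖ F] [RightCStarModule A F] [CompleteSpace F]

/-- Here `Q` plays the role of `(1+t*t)^{-1/2}`, `Ft = t ∘ Q` is the bounded transform and `Fts`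
its adjoint. The first conjunct is `Q² = 1 - F_t* F_t`, so that the positive `Q` is
`(1 - F_t* F_t)^{1/2}`; the second is `t ∘ Q⁻¹ ⊆ F_t`, i.e. `t = F_t (1 - F_t* F_t)^{-1/2}`. -/
theorem eq_boundedTransform_comp_inv_general (t : E →ₗ.[ℂ] F) (s : F →ₗ.[ℂ] E)
    (ht : IsRegular A t s)
    (Q : E →L[ℂ] E)
    (hmem : ∀ x : E, Q x ∈ t.domain)
    (hQsa : ∀ x y : E, ⟪Q x, y⟫_A = ⟪x, Q y⟫_A)
    (hQinv : ∀ u : E, ∃ h : t ⟨Q (Q u), hmem (Q u)⟩ ∈ s.domain,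
      Q (Q u) + s ⟨t ⟨Q (Q u), hmem (Q u)⟩, h⟩ = u)
    (Ft : E →L[ℂ] F) (Fts : F →L[ℂ] E)
    (hFt : ∀ x : E, Ft x = t ⟨Q x, hmem x⟩)
    (hFadj : ∀ (x : E) (y : F), ⟪Ft x, y⟫_A = ⟪x, Fts y⟫_A) :
    (∀ u : E, Q (Q u) = u - Fts (Ft u)) ∧
      (∀ (x : t.domain) (y : E), Q y = (x : E) → t x = Ft y) := by
  have hQ_inj : Function.Injective Q :=
    injective_of_one_add_comp_sq_eq_id t s Q hmem hQinv
  refine ⟨fun u ↦ ?_, fun x y hxy ↦ by rw [hFt y]; exact congrArg t (Subtype.ext hxy.symm)⟩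
  have hQ_inner (x : E) : ⟪Q x, Fts (Ft u)⟫_A = ⟪Q x, u - Q (Q u)⟫_A := by
    rw [← hFadj, hFt, hFt, inner_apply_sq_apply_eq_inner_sub ht.adj hmem hQinv]
    change ⟪x - Q (Q x), Q u⟫_A = _
    rw [RightCStarModule.inner_sub_left, RightCStarModule.inner_sub_right, hQsa (Q x), ← hQsa x]
  have hFF : Fts (Ft u) = u - Q (Q u) :=
    hQ_inj <| RightCStarModule.ext_inner_left fun x ↦ by rw [← hQsa, ← hQsa, hQ_inner]
  rw [hFF, sub_sub_cancel]

/-- a regular operator is recovered from its bounded transform: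
`t = F_t (1 - F_t* F_t)^{-1/2}` and `(1+t*t)^{-1/2} = (1 - F_t* F_t)^{1/2}`.
Here `Q` plays the role of `(1+t*t)^{-1/2}` (positive, selfadjoint, range `Dom(t)`,
square inverse to `1+t*t`), `Ft = t ∘ Q` is the bounded transform and `Fts` its
adjoint; the conclusion states `Q² = 1 - F_t* F_t` (so that, `Q` being positive,
`Q = (1 - F_t* F_t)^{1/2}`) and `t ∘ Q⁻¹ ⊆ F_t`, i.e. `t = F_t (1 - F_t* F_t)^{-1/2}`. -/
theorem eq_boundedTransform_comp_inv (t : E →ₗ.[ℂ] F) (s : F →ₗ.[ℂ] E)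
    (ht : IsRegular A t s)
    (Q : E →L[ℂ] E)
    (hmem : ∀ x : E, Q x ∈ t.domain)
    (hQsa : ∀ x y : E, ⟪Q x, y⟫_A = ⟪x, Q y⟫_A)
    (hQpos : ∀ x : E, ∃ a : A, ⟪x, Q x⟫_A = star a * a)
    (hQran : Set.range Q = (t.domain : Set E))
    (hQinv : ∀ u : E, ∃ h : t ⟨Q (Q u), hmem (Q u)⟩ ∈ s.domain,
      Q (Q u) + s ⟨t ⟨Q (Q u), hmem (Q u)⟩, h⟩ = u)
    (Ft : E →L[ℂ] F) (Fts : F →L[ℂ] E)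
    (hFt : ∀ x : E, Ft x = t ⟨Q x, hmem x⟩)
    (hFadj : ∀ (x : E) (y : F), ⟪Ft x, y⟫_A = ⟪x, Fts y⟫_A) :
    (∀ u : E, Q (Q u) = u - Fts (Ft u)) ∧
      (∀ (x : t.domain) (y : E), Q y = (x : E) → t x = Ft y) :=
  eq_boundedTransform_comp_inv_general t s ht Q hmem hQsa hQinv Ft Fts hFt hFadj
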